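/- Let k be a positive integer. (a) The number of symmetrical independent sets of the path graph P_{2k} is F_{k+1}. (b) The number of symmetrical independent sets of the path graph P_{2k−1} is F_{k+2}. -/

import Mathlib

/-!
A symmetric independent set `S` of `P_n` is determined by its left half `S ∩ [1, m]`, and
`S = T ∪ T^rev` recovers it from the half `T`. For `n = 2k - 1` (with `m = k`) every independent
set of `P_k` is such a half. For `n = 2k` the middle vertices `k` and `k + 1` are adjacent mirror
images, so neither lies in `S`, and the halves are the independent sets of `P_{k-1}`. Finally,
independent sets of `P_n` are counted by `F_{n+2}`: those avoiding `n` are the independent sets of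
`P_{n-1}`, those containing `n` are `{n} ∪ T` with `T` independent in `P_{n-2}`.
-/

/-- An independent set of the path graph `P_n` (vertices `1,…,n`, edges `{i,i+1}`):
a subset of `{1,…,n}` containing no two adjacent vertices. -/
def IndepSet (n : ℕ) (S : Finset ℕ) : Prop :=
  S ⊆ Finset.Icc 1 n ∧ ∀ i ∈ S, i + 1 ∉ S

/-- The reverse `S^rev = {n+1−i : i ∈ S}` of an independent set. -/
def revSet (n : ℕ) (S : Finset ℕ) : Finset ℕ := S.image fun i => n + 1 - i

open Finset

instance (n : ℕ) : DecidablePred (IndepSet n) := fun _ => inferInstanceAs (Decidable (_ ∧ _))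

def indepSets (n : ℕ) : Finset (Finset ℕ) := (Icc 1 n).powerset.filter (IndepSet n)

lemma mem_indepSets {n : ℕ} {S : Finset ℕ} : S ∈ indepSets n ↔ IndepSet n S := by
  simp only [indepSets, mem_filter, mem_powerset]
  exact and_iff_right_of_imp And.left

lemma indepSet_add_one_iff {n : ℕ} {S : Finset ℕ} (h : n + 1 ∉ S) :
    IndepSet (n + 1) S ↔ IndepSet n S := by
  simp only [IndepSet, subset_iff, mem_Icc]
  grind

lemma indepSet_insert_iff {n : ℕ} {S : Finset ℕ} (h : n + 2 ∉ S) :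
    IndepSet (n + 2) (insert (n + 2) S) ↔ IndepSet n S := by
  simp only [IndepSet, subset_iff, mem_Icc, mem_insert]
  grind

lemma IndepSet.notMem_of_lt {n i : ℕ} {S : Finset ℕ} (h : IndepSet n S) (hi : n < i) : i ∉ S :=
  fun hiS => by have := mem_Icc.1 (h.1 hiS); omega

theorem card_indepSets : ∀ n, #(indepSets n) = Nat.fib (n + 2)
  | 0 => rfl
  | 1 => rfl
  | n + 2 => by
    have hout : #((indepSets (n + 2)).filter (n + 2 ∉ ·)) = #(indepSets (n + 1)) := by
      congr 1
      ext S
      simp only [mem_filter, mem_indepSets]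
      constructor
      · rintro ⟨hS, hn⟩
        exact (indepSet_add_one_iff hn).1 hS
      · intro hS
        have := hS.notMem_of_lt (i := n + 2) (by omega)
        exact ⟨(indepSet_add_one_iff this).2 hS, this⟩
    have hin : #((indepSets (n + 2)).filter (n + 2 ∈ ·)) = #(indepSets n) := by
      refine card_nbij' (erase · (n + 2)) (insert (n + 2)) ?_ ?_ ?_ ?_
      · intro S hS
        simp only [coe_filter, Set.mem_ofPred_eq, mem_coe, mem_indepSets] at hS ⊢
        rw [← indepSet_insert_iff (notMem_erase _ _), insert_erase hS.2]
        exact hS.1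
      · intro T hT
        have hT' := (mem_indepSets.1 hT).notMem_of_lt (i := n + 2) (by omega)
        simp only [coe_filter, Set.mem_ofPred_eq, mem_indepSets, mem_coe] at hT ⊢
        exact ⟨(indepSet_insert_iff hT').2 hT, mem_insert_self _ _⟩
      · intro S hS
        exact insert_erase (mem_filter.1 hS).2
      · intro T hT
        exact erase_insert ((mem_indepSets.1 hT).notMem_of_lt (by omega))
    rw [← card_filter_add_card_filter_not (n + 2 ∈ ·), hin, hout, card_indepSets n,
      card_indepSets (n + 1), Nat.fib_add_two (n := n + 2)]

lemma mem_revSet {n i : ℕ} {S : Finset ℕ} (hS : S ⊆ Icc 1 n) :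
    i ∈ revSet n S ↔ i ∈ Icc 1 n ∧ n + 1 - i ∈ S := by
  simp only [revSet, mem_image, mem_Icc]
  constructor
  · rintro ⟨j, hj, rfl⟩
    have := mem_Icc.1 (hS hj)
    exact ⟨⟨by omega, by omega⟩, by rwa [show n + 1 - (n + 1 - j) = j by omega]⟩
  · rintro ⟨hi, hiS⟩
    exact ⟨n + 1 - i, hiS, by omega⟩

lemma revSet_subset {n : ℕ} {S : Finset ℕ} (hS : S ⊆ Icc 1 n) : revSet n S ⊆ Icc 1 n :=
  fun _ hi => ((mem_revSet hS).1 hi).1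

lemma revSet_revSet {n : ℕ} {S : Finset ℕ} (hS : S ⊆ Icc 1 n) : revSet n (revSet n S) = S := by
  ext i
  rw [mem_revSet (revSet_subset hS), mem_revSet hS]
  constructor
  · rintro ⟨hi, -, h⟩
    rwa [show n + 1 - (n + 1 - i) = i by have := mem_Icc.1 hi; omega] at h
  · intro hi
    have := mem_Icc.1 (hS hi)
    exact ⟨hS hi, mem_Icc.2 ⟨by omega, by omega⟩, by rwa [show n + 1 - (n + 1 - i) = i by omega]⟩

lemma mem_of_revSet_eq_self {n i : ℕ} {S : Finset ℕ} (h : revSet n S = S) (hi : i ∈ S) :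
    n + 1 - i ∈ S :=
  h ▸ mem_image_of_mem _ hi

def symIndepSets (n : ℕ) : Finset (Finset ℕ) := (indepSets n).filter (fun S => revSet n S = S)

lemma coe_symIndepSets (n : ℕ) :
    (symIndepSets n : Set (Finset ℕ)) = {S | IndepSet n S ∧ revSet n S = S} := by
  ext S
  simp [symIndepSets, mem_indepSets]

lemma IndepSet.filter_le {n : ℕ} {S : Finset ℕ} (h : IndepSet n S) (m : ℕ) :
    IndepSet m (S.filter (· ≤ m)) := by
  refine ⟨fun i hi => ?_, fun i hi hi' => h.2 i (mem_filter.1 hi).1 (mem_filter.1 hi').1⟩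
  obtain ⟨hiS, him⟩ := mem_filter.1 hi
  have := mem_Icc.1 (h.1 hiS)
  exact mem_Icc.2 ⟨this.1, him⟩

-- `a` is adjacent to the mirror image `n + 1 - b` iff `a + b = n` or `a + b = n + 2`; `hm` rules
-- out the latter.
lemma IndepSet.union_revSet {m n : ℕ} {T : Finset ℕ} (hT : IndepSet m T) (hm : 2 * m ≤ n + 1)
    (hcross : ∀ a ∈ T, ∀ b ∈ T, a + b ≠ n) : IndepSet n (T ∪ revSet n T) := by
  have hTn : T ⊆ Icc 1 n := hT.1.trans (Icc_subset_Icc_right (by omega))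
  have hTm := hT.1
  have hind := hT.2
  refine ⟨union_subset hTn (revSet_subset hTn), fun i hi hi' => ?_⟩
  simp only [mem_union, mem_revSet hTn] at hi hi'
  simp only [subset_iff, mem_Icc] at hTm
  grind

lemma revSet_union_revSet {n : ℕ} {T : Finset ℕ} (hT : T ⊆ Icc 1 n) :
    revSet n (T ∪ revSet n T) = T ∪ revSet n T := by
  rw [revSet, image_union, ← revSet, ← revSet, revSet_revSet hT, union_comm]

lemma filter_le_union_revSet {m n : ℕ} {T : Finset ℕ} (hT : T ⊆ Icc 1 m) (hm : 2 * m ≤ n + 1) :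
    (T ∪ revSet n T).filter (· ≤ m) = T := by
  have hTn : T ⊆ Icc 1 n := hT.trans (Icc_subset_Icc_right (by omega))
  ext i
  simp only [mem_filter, mem_union, mem_revSet hTn]
  simp only [subset_iff, mem_Icc] at hT
  grind

lemma filter_le_union_revSet_filter_le {m n : ℕ} {S : Finset ℕ} (hS : S ⊆ Icc 1 n)
    (hsym : revSet n S = S) (hhalf : ∀ i ∈ S, i ≤ m ∨ n + 1 - i ≤ m) :
    S.filter (· ≤ m) ∪ revSet n (S.filter (· ≤ m)) = S := by
  ext i
  simp only [mem_union, mem_filter, mem_revSet ((filter_subset _ S).trans hS)]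
  have hmirror := fun j (hj : j ∈ S) => mem_of_revSet_eq_self hsym hj
  simp only [subset_iff, mem_Icc] at hS
  grind

theorem card_symIndepSets_eq_card_indepSets {m n : ℕ} (hm : 2 * m ≤ n + 1)
    (hhalf : ∀ S, IndepSet n S → revSet n S = S → ∀ i ∈ S, i ≤ m ∨ n + 1 - i ≤ m)
    (hcross : ∀ T, IndepSet m T → ∀ a ∈ T, ∀ b ∈ T, a + b ≠ n) :
    #(symIndepSets n) = #(indepSets m) := by
  have hmem : ∀ {S}, S ∈ (symIndepSets n : Set (Finset ℕ)) ↔ IndepSet n S ∧ revSet n S = S :=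
    by simp [coe_symIndepSets]
  refine card_nbij' (·.filter (· ≤ m)) (fun T => T ∪ revSet n T) ?_ ?_ ?_ ?_
  · intro S hS
    exact mem_indepSets.2 ((hmem.1 hS).1.filter_le m)
  · intro T hT
    have hT := mem_indepSets.1 hT
    have hTn : T ⊆ Icc 1 n := hT.1.trans (Icc_subset_Icc_right (by omega))
    exact hmem.2 ⟨hT.union_revSet hm (hcross T hT), revSet_union_revSet hTn⟩
  · intro S hS
    obtain ⟨hS, hsym⟩ := hmem.1 hS
    exact filter_le_union_revSet_filter_le hS.1 hsym (hhalf S hS hsym)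
  · intro T hT
    exact filter_le_union_revSet (mem_indepSets.1 hT).1 hm

lemma IndepSet.middle_notMem {k : ℕ} {S : Finset ℕ} (h : IndepSet (2 * k) S)
    (hsym : revSet (2 * k) S = S) : k ∉ S ∧ k + 1 ∉ S := by
  have hk : k ∉ S := fun hk =>
    h.2 k hk (by simpa [show 2 * k + 1 - k = k + 1 by omega] using mem_of_revSet_eq_self hsym hk)
  refine ⟨hk, fun hk1 => hk ?_⟩
  simpa [show 2 * k + 1 - (k + 1) = k by omega] using mem_of_revSet_eq_self hsym hk1

theorem card_symIndepSets_two_mul (k : ℕ) : #(symIndepSets (2 * k)) = #(indepSets (k - 1)) := by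
  refine card_symIndepSets_eq_card_indepSets (by omega) (fun S hS hsym i hi => ?_) ?_
  · have := mem_Icc.1 (hS.1 hi)
    have := hS.middle_notMem hsym
    grind
  · intro T hT a ha b hb
    have := mem_Icc.1 (hT.1 ha)
    have := mem_Icc.1 (hT.1 hb)
    omega

theorem card_symIndepSets_two_mul_sub_one (k : ℕ) :
    #(symIndepSets (2 * k - 1)) = #(indepSets k) := by
  refine card_symIndepSets_eq_card_indepSets (by omega) (fun _ _ _ i _ => by omega) ?_
  intro T hT a ha b hb hab
  -- `a + b = 2k - 1` with `a, b ≤ k` forces `{a, b} = {k - 1, k}`, two adjacent vertices.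
  have := mem_Icc.1 (hT.1 ha)
  have := mem_Icc.1 (hT.1 hb)
  have := hT.2
  grind

theorem stmt13_general (k : ℕ) :
    Set.ncard {S : Finset ℕ | IndepSet (2 * k) S ∧ revSet (2 * k) S = S}
        = Nat.fib (k + 1)
    ∧ Set.ncard {S : Finset ℕ | IndepSet (2 * k - 1) S ∧ revSet (2 * k - 1) S = S}
        = Nat.fib (k + 2) := by
  rw [← coe_symIndepSets, ← coe_symIndepSets, Set.ncard_coe_finset, Set.ncard_coe_finset,
    card_symIndepSets_two_mul, card_symIndepSets_two_mul_sub_one, card_indepSets, card_indepSets]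
  exact ⟨by cases k <;> rfl, rfl⟩

/-- (a) The number of symmetrical independent sets of `P_{2k}` is `F_{k+1}`.
(b) The number of symmetrical independent sets of `P_{2k−1}` is `F_{k+2}`. -/
theorem stmt13 (k : ℕ) (hk : 1 ≤ k) :
    Set.ncard {S : Finset ℕ | IndepSet (2 * k) S ∧ revSet (2 * k) S = S}
        = Nat.fib (k + 1)
    ∧ Set.ncard {S : Finset ℕ | IndepSet (2 * k - 1) S ∧ revSet (2 * k - 1) S = S}
        = Nat.fib (k + 2) :=
  stmt13_general k
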